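/- arXiv:1003.5408 — 3 statements merged into one kernel-verified Lean document; each statement's English description precedes it below -/
import Mathlib

section
/- The homomorphism from the group with presentation ⟨x, y | xy²x⁻¹y² = 1, yx²y⁻¹x² = 1⟩ to G₆ sending the generator x to the affine transformation x = (½e₁, X) and the generator y to y = (½(e₂−e₃), Y) is an isomorphism of groups. -/
/-! `Aff(3) = ℝ³ ⋊ GL(3,ℝ)`, realized as the group of affine self-equivalences of `ℝ³`
(with multiplication given by composition, so that `(v,A)(w,B) = (v + Aw, AB)`). -/

abbrev V3 : Type := Fin 3 → ℝ
abbrev Aff3 : Type := V3 ≃ᵃ[ℝ] V3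

/-- The linear self-equivalence of `ℝ³` given by a diagonal matrix with entries `±1`. -/
noncomputable def diagLin (d : Fin 3 → ℝ) (hd : ∀ i, d i * d i = 1) : V3 ≃ₗ[ℝ] V3 where
  toFun v := fun i => d i * v i
  invFun v := fun i => d i * v i
  map_add' u v := by funext i; simp [mul_add]
  map_smul' c v := by funext i; simp [smul_eq_mul]; ring
  left_inv v := by funext i; simp [← mul_assoc, hd i]
  right_inv v := by funext i; simp [← mul_assoc, hd i]

lemma sq_one_X : ∀ i, (![(1:ℝ),-1,-1]) i * (![(1:ℝ),-1,-1]) i = 1 := by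
  intro i; fin_cases i <;> norm_num

lemma sq_one_Y : ∀ i, (![(-1:ℝ),1,-1]) i * (![(-1:ℝ),1,-1]) i = 1 := by
  intro i; fin_cases i <;> norm_num

/-- The affine transformation `x = (½e₁, X)`, acting by `w ↦ Xw + ½e₁`,
where `X = diag[1,−1,−1]`. -/
noncomputable def affx : Aff3 :=
  ((diagLin ![1,-1,-1] sq_one_X).toAffineEquiv).trans
    (AffineEquiv.constVAdd ℝ V3 ![1/2, 0, 0])

/-- The affine transformation `y = (½(e₂−e₃), Y)`, acting by `w ↦ Yw + ½(e₂−e₃)`,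
where `Y = diag[−1,1,−1]`. -/
noncomputable def affy : Aff3 :=
  ((diagLin ![-1,1,-1] sq_one_Y).toAffineEquiv).trans
    (AffineEquiv.constVAdd ℝ V3 ![0, 1/2, -1/2])

/-- `z = xy = (½(e₁−e₂+e₃), Z)`. -/
noncomputable def affz : Aff3 := affx * affy

/-- The Hantzsche–Wendt group `G₆`, the subgroup of `Aff(3)` generated by `x` and `y`. -/
noncomputable def G6 : Subgroup Aff3 := Subgroup.closure {affx, affy}

/-- The translation subgroup `T = G₆ ∩ (ℝ³ × {I})`: the elements of `G₆`
whose linear part is the identity. -/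
noncomputable def TT : Subgroup Aff3 :=
  G6 ⊓ (AffineEquiv.linearHom : Aff3 →* (V3 ≃ₗ[ℝ] V3)).ker

lemma affx_mem : affx ∈ G6 := Subgroup.subset_closure (by simp)
lemma affy_mem : affy ∈ G6 := Subgroup.subset_closure (by simp)

/-- `x` as an element of `G₆`. -/
noncomputable def xg : G6 := ⟨affx, affx_mem⟩
/-- `y` as an element of `G₆`. -/
noncomputable def yg : G6 := ⟨affy, affy_mem⟩
/-- `z = xy` as an element of `G₆`. -/
noncomputable def zg : G6 := xg * yg

/-- The relations `xy²x⁻¹y² = 1` and `yx²y⁻¹x² = 1` in the free group on two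
generators (generator `0` playing the role of `x`, generator `1` that of `y`). -/
def hwRels : Set (FreeGroup (Fin 2)) :=
  { FreeGroup.of 0 * (FreeGroup.of 1) ^ 2 * (FreeGroup.of 0)⁻¹ * (FreeGroup.of 1) ^ 2,
    FreeGroup.of 1 * (FreeGroup.of 0) ^ 2 * (FreeGroup.of 1)⁻¹ * (FreeGroup.of 0) ^ 2 }

lemma affx_apply (v : V3) (i : Fin 3) : affx v i = ![(1:ℝ)/2,0,0] i + ![(1:ℝ),-1,-1] i * v i := by
  simp [affx, diagLin]
lemma affy_apply (v : V3) (i : Fin 3) : affy v i = ![(0:ℝ),1/2,-1/2] i + ![(-1:ℝ),1,-1] i * v i := by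
  simp [affy, diagLin]

lemma aff_rel1 : affy * affy * (affx * (affy * affy)) = affx := by
  ext v i
  simp only [AffineEquiv.coe_mul, Function.comp_apply, affx_apply, affy_apply]
  fin_cases i <;> (norm_num; try ring)

lemma aff_rel2 : affx * affx * (affy * (affx * affx)) = affy := by
  ext v i
  simp only [AffineEquiv.coe_mul, Function.comp_apply, affx_apply, affy_apply]
  fin_cases i <;> (norm_num; try ring)

lemma affxx : affx * affx = AffineEquiv.constVAdd ℝ V3 ![1,0,0] := by
  ext v i
  simp only [AffineEquiv.coe_mul, Function.comp_apply, affx_apply,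
    AffineEquiv.constVAdd_apply, Pi.add_apply]
  fin_cases i <;> (norm_num; try ring)

lemma affyy : affy * affy = AffineEquiv.constVAdd ℝ V3 ![0,1,0] := by
  ext v i
  simp only [AffineEquiv.coe_mul, Function.comp_apply, affy_apply,
    AffineEquiv.constVAdd_apply, Pi.add_apply]
  fin_cases i <;> (norm_num; try ring)

lemma affzz : (affx * affy) * (affx * affy) = AffineEquiv.constVAdd ℝ V3 ![0,0,1] := by
  ext v i
  simp only [AffineEquiv.coe_mul, Function.comp_apply, affx_apply, affy_apply,
    AffineEquiv.constVAdd_apply, Pi.add_apply]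
  fin_cases i <;> (norm_num; try ring)

namespace HW

abbrev P : Type := PresentedGroup hwRels

noncomputable def Xp : P := PresentedGroup.of 0
noncomputable def Yp : P := PresentedGroup.of 1

lemma mk_of (i : Fin 2) : PresentedGroup.mk hwRels (FreeGroup.of i) = PresentedGroup.of i := rfl

lemma rel1P : Xp * (Yp * Yp) * Xp⁻¹ * (Yp * Yp) = 1 := by
  have h : PresentedGroup.mk hwRels
      (FreeGroup.of 0 * (FreeGroup.of 1) ^ 2 * (FreeGroup.of 0)⁻¹ * (FreeGroup.of 1) ^ 2) = 1 :=
    (QuotientGroup.eq_one_iff _).2 (Subgroup.subset_normalClosure (by simp [hwRels]))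
  simpa [pow_two, mk_of, Xp, Yp] using h

lemma rel2P : Yp * (Xp * Xp) * Yp⁻¹ * (Xp * Xp) = 1 := by
  have h : PresentedGroup.mk hwRels
      (FreeGroup.of 1 * (FreeGroup.of 0) ^ 2 * (FreeGroup.of 1)⁻¹ * (FreeGroup.of 0) ^ 2) = 1 :=
    (QuotientGroup.eq_one_iff _).2 (Subgroup.subset_normalClosure (by simp [hwRels]))
  simpa [pow_two, mk_of, Xp, Yp] using h

/-- `X b = b⁻¹ X` -/
lemma sXb : SemiconjBy Xp (Yp * Yp) (Yp * Yp)⁻¹ := by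
  unfold SemiconjBy
  calc Xp * (Yp * Yp) = (Xp * (Yp * Yp) * Xp⁻¹ * (Yp * Yp)) * (Yp*Yp)⁻¹ * Xp := by group
  _ = (Yp * Yp)⁻¹ * Xp := by rw [rel1P]; group

lemma sYa : SemiconjBy Yp (Xp * Xp) (Xp * Xp)⁻¹ := by
  unfold SemiconjBy
  calc Yp * (Xp * Xp) = (Yp * (Xp * Xp) * Yp⁻¹ * (Xp * Xp)) * (Xp*Xp)⁻¹ * Yp := by group
  _ = (Xp * Xp)⁻¹ * Yp := by rw [rel2P]; group


lemma scj_conv {g u w u' w' : P} (h : SemiconjBy g u w) (hu : u = u') (hw : w = w') :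
    SemiconjBy g u' w' := hu ▸ hw ▸ h

lemma ruleOf {g u1 u2 v1 v2 : P} (h : SemiconjBy g (u1 * u2) (v1 * v2)) (t : P) :
    g * (u1 * (u2 * t)) = v1 * (v2 * (g * t)) := by
  have h' : g * (u1 * u2) = (v1 * v2) * g := h
  calc g * (u1 * (u2 * t)) = (g * (u1 * u2)) * t := by group
    _ = ((v1 * v2) * g) * t := by rw [h']
    _ = v1 * (v2 * (g * t)) := by group

lemma sXb' : SemiconjBy Xp (Yp * Yp) (Yp⁻¹ * Yp⁻¹) := scj_conv sXb rfl (by group)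
lemma sYa' : SemiconjBy Yp (Xp * Xp) (Xp⁻¹ * Xp⁻¹) := scj_conv sYa rfl (by group)
lemma sYinva : SemiconjBy Yp⁻¹ (Xp * Xp) (Xp⁻¹ * Xp⁻¹) :=
  scj_conv sYa'.inv_symm_left.inv_right (by simp [mul_inv_rev]) (by simp [mul_inv_rev])
lemma sXinvb : SemiconjBy Xp⁻¹ (Yp * Yp) (Yp⁻¹ * Yp⁻¹) :=
  scj_conv sXb'.inv_symm_left.inv_right (by simp [mul_inv_rev]) (by simp [mul_inv_rev])
lemma sYainv : SemiconjBy Yp (Xp⁻¹ * Xp⁻¹) (Xp * Xp) :=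
  scj_conv sYa'.inv_right (by simp [mul_inv_rev]) (by simp [mul_inv_rev])

lemma R_Xb (t : P) : Xp * (Yp * (Yp * t)) = Yp⁻¹ * (Yp⁻¹ * (Xp * t)) := ruleOf sXb' t
lemma R_Ya (t : P) : Yp * (Xp * (Xp * t)) = Xp⁻¹ * (Xp⁻¹ * (Yp * t)) := ruleOf sYa' t
lemma R_Yinva (t : P) : Yp⁻¹ * (Xp * (Xp * t)) = Xp⁻¹ * (Xp⁻¹ * (Yp⁻¹ * t)) := ruleOf sYinva t
lemma R_Xinvb (t : P) : Xp⁻¹ * (Yp * (Yp * t)) = Yp⁻¹ * (Yp⁻¹ * (Xp⁻¹ * t)) := ruleOf sXinvb t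
lemma R_Yainv (t : P) : Yp * (Xp⁻¹ * (Xp⁻¹ * t)) = Xp * (Xp * (Yp * t)) := ruleOf sYainv t

lemma k1'' : Xp*Xp*Yp*Xp*Yp*Yp*Xp*Yp = 1 := by
  simp only [mul_assoc]
  rw [R_Xb, mul_inv_cancel_left, R_Yinva]
  group

lemma k2alt2 : Yp*Xp*Yp*Xp*Xp*Yp*Xp*Yp = 1 := by
  simp only [mul_assoc]
  rw [R_Ya, mul_inv_cancel_left, R_Xinvb]
  group

lemma k3w : Yp*Xp*Xp*Yp*Xp*Xp*Yp⁻¹*Yp⁻¹ = 1 := by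
  simp only [mul_assoc]
  rw [R_Ya, R_Ya, mul_inv_cancel_left, R_Yainv]
  group

lemma k4w : Yp*Xp*Yp*Yp*Xp*Yp*Xp*Xp = 1 := by
  simp only [mul_assoc]
  rw [R_Xb, mul_inv_cancel_left, R_Yinva]
  group


noncomputable def ap : P := Xp * Xp
noncomputable def bp : P := Yp * Yp
noncomputable def cp : P := Xp * Yp * (Xp * Yp)

lemma sXc : SemiconjBy Xp cp cp⁻¹ := by
  unfold SemiconjBy
  rw [← mul_inv_eq_one]
  calc Xp * cp * (cp⁻¹ * Xp)⁻¹ = Xp*Xp*Yp*Xp*Yp*Yp*Xp*Yp := by simp only [cp]; group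
    _ = 1 := k1''

lemma sYc : SemiconjBy Yp cp cp⁻¹ := by
  unfold SemiconjBy
  rw [← mul_inv_eq_one]
  calc Yp * cp * (cp⁻¹ * Yp)⁻¹ = Yp*Xp*Yp*Xp*Xp*Yp*Xp*Yp := by simp only [cp]; group
    _ = 1 := k2alt2

lemma k3 : Yp * Xp = bp * (ap⁻¹ * (cp⁻¹ * (Xp * Yp))) := by
  rw [← mul_inv_eq_one]
  calc Yp * Xp * (bp * (ap⁻¹ * (cp⁻¹ * (Xp * Yp))))⁻¹
      = Yp*Xp*Xp*Yp*Xp*Xp*Yp⁻¹*Yp⁻¹ := by simp only [ap, bp, cp]; group; rw [zpow_two]; group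
    _ = 1 := k3w

lemma k4 : Yp * (Xp * Yp) = ap⁻¹ * (cp⁻¹ * Xp) := by
  rw [← mul_inv_eq_one]
  calc Yp * (Xp * Yp) * (ap⁻¹ * (cp⁻¹ * Xp))⁻¹
      = Yp*Xp*Yp*Yp*Xp*Yp*Xp*Xp := by simp only [ap, cp]; group; rw [zpow_two]; group
    _ = 1 := k4w

lemma sXbp : SemiconjBy Xp bp bp⁻¹ := sXb
lemma sYap : SemiconjBy Yp ap ap⁻¹ := sYa

lemma cAB : Commute ap bp := by
  have h1 : SemiconjBy Xp bp⁻¹ bp := scj_conv sXbp.inv_right rfl (inv_inv bp)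
  exact h1.mul_left sXbp
lemma cAC : Commute ap cp := by
  have h1 : SemiconjBy Xp cp⁻¹ cp := scj_conv sXc.inv_right rfl (inv_inv cp)
  exact h1.mul_left sXc
lemma cBC : Commute bp cp := by
  have h1 : SemiconjBy Yp cp⁻¹ cp := scj_conv sYc.inv_right rfl (inv_inv cp)
  exact h1.mul_left sYc

noncomputable def N : Subgroup P := Subgroup.closure {ap, bp, cp}

lemma memNa : ap ∈ N := Subgroup.subset_closure (by simp)
lemma memNb : bp ∈ N := Subgroup.subset_closure (by simp)
lemma memNc : cp ∈ N := Subgroup.subset_closure (by simp)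

lemma conjX : ∀ n ∈ N, Xp * n * Xp⁻¹ ∈ N := by
  intro n hn
  induction hn using Subgroup.closure_induction with
  | mem g hg =>
    rcases hg with rfl | rfl | rfl
    · rw [show Xp * ap * Xp⁻¹ = ap from by simp only [ap]; group]; exact memNa
    · rw [show Xp * bp * Xp⁻¹ = bp⁻¹ from by
        rw [show Xp * bp * Xp⁻¹ = (Xp * bp) * Xp⁻¹ from rfl, (sXbp : Xp * bp = _)]; group]
      exact inv_mem memNb
    · rw [show Xp * cp * Xp⁻¹ = cp⁻¹ from by
        rw [show Xp * cp * Xp⁻¹ = (Xp * cp) * Xp⁻¹ from rfl, (sXc : Xp * cp = _)]; group]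
      exact inv_mem memNc
  | one => simpa using one_mem N
  | mul u v hu hv ihu ihv =>
    rw [show Xp * (u * v) * Xp⁻¹ = (Xp * u * Xp⁻¹) * (Xp * v * Xp⁻¹) from by group]
    exact mul_mem ihu ihv
  | inv u hu ihu =>
    rw [show Xp * u⁻¹ * Xp⁻¹ = (Xp * u * Xp⁻¹)⁻¹ from by group]
    exact inv_mem ihu

lemma conjY : ∀ n ∈ N, Yp * n * Yp⁻¹ ∈ N := by
  intro n hn
  induction hn using Subgroup.closure_induction with
  | mem g hg =>
    rcases hg with rfl | rfl | rfl
    · rw [show Yp * ap * Yp⁻¹ = ap⁻¹ from by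
        rw [show Yp * ap * Yp⁻¹ = (Yp * ap) * Yp⁻¹ from rfl, (sYap : Yp * ap = _)]; group]
      exact inv_mem memNa
    · rw [show Yp * bp * Yp⁻¹ = bp from by simp only [bp]; group]; exact memNb
    · rw [show Yp * cp * Yp⁻¹ = cp⁻¹ from by
        rw [show Yp * cp * Yp⁻¹ = (Yp * cp) * Yp⁻¹ from rfl, (sYc : Yp * cp = _)]; group]
      exact inv_mem memNc
  | one => simpa using one_mem N
  | mul u v hu hv ihu ihv =>
    rw [show Yp * (u * v) * Yp⁻¹ = (Yp * u * Yp⁻¹) * (Yp * v * Yp⁻¹) from by group]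
    exact mul_mem ihu ihv
  | inv u hu ihu =>
    rw [show Yp * u⁻¹ * Yp⁻¹ = (Yp * u * Yp⁻¹)⁻¹ from by group]
    exact inv_mem ihu


/-- The normal form predicate. -/
def NF (q : P) : Prop :=
  ∃ n w, n ∈ N ∧ (w = 1 ∨ w = Xp ∨ w = Yp ∨ w = Xp * Yp) ∧ q = n * w

lemma NF_mul_left {m q : P} (hm : m ∈ N) (h : NF q) : NF (m * q) := by
  obtain ⟨n, w, hn, hw, rfl⟩ := h
  exact ⟨m * n, w, mul_mem hm hn, hw, by group⟩

lemma NF_stepX {q : P} (h : NF q) : NF (Xp * q) := by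
  obtain ⟨n, w, hn, hw, rfl⟩ := h
  rcases hw with rfl | rfl | rfl | rfl
  · exact ⟨Xp * n * Xp⁻¹, Xp, conjX n hn, by tauto, by group⟩
  · exact ⟨Xp * n * Xp⁻¹ * ap, 1, mul_mem (conjX n hn) memNa, by tauto, by simp only [ap]; group⟩
  · exact ⟨Xp * n * Xp⁻¹, Xp * Yp, conjX n hn, by tauto, by group⟩
  · exact ⟨Xp * n * Xp⁻¹ * ap, Yp, mul_mem (conjX n hn) memNa, by tauto, by simp only [ap]; group⟩

lemma NF_stepY {q : P} (h : NF q) : NF (Yp * q) := by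
  obtain ⟨n, w, hn, hw, rfl⟩ := h
  rcases hw with rfl | rfl | rfl | rfl
  · exact ⟨Yp * n * Yp⁻¹, Yp, conjY n hn, by tauto, by group⟩
  · refine ⟨Yp * n * Yp⁻¹ * (bp * (ap⁻¹ * cp⁻¹)), Xp * Yp,
      mul_mem (conjY n hn) (mul_mem memNb (mul_mem (inv_mem memNa) (inv_mem memNc))), by tauto, ?_⟩
    calc Yp * (n * Xp) = (Yp * n * Yp⁻¹) * (Yp * Xp) := by group
      _ = (Yp * n * Yp⁻¹) * (bp * (ap⁻¹ * (cp⁻¹ * (Xp * Yp)))) := by rw [k3]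
      _ = Yp * n * Yp⁻¹ * (bp * (ap⁻¹ * cp⁻¹)) * (Xp * Yp) := by group
  · exact ⟨Yp * n * Yp⁻¹ * bp, 1, mul_mem (conjY n hn) memNb, by tauto, by simp only [bp]; group⟩
  · refine ⟨Yp * n * Yp⁻¹ * (ap⁻¹ * cp⁻¹), Xp,
      mul_mem (conjY n hn) (mul_mem (inv_mem memNa) (inv_mem memNc)), by tauto, ?_⟩
    calc Yp * (n * (Xp * Yp)) = (Yp * n * Yp⁻¹) * (Yp * (Xp * Yp)) := by group
      _ = (Yp * n * Yp⁻¹) * (ap⁻¹ * (cp⁻¹ * Xp)) := by rw [k4]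
      _ = Yp * n * Yp⁻¹ * (ap⁻¹ * cp⁻¹) * Xp := by group

lemma gen_set : ({Xp, Yp} : Set P) = Set.range (PresentedGroup.of : Fin 2 → P) := by
  ext g
  constructor
  · rintro (rfl | rfl)
    · exact ⟨0, rfl⟩
    · exact ⟨1, rfl⟩
  · rintro ⟨i, rfl⟩
    fin_cases i
    · left; rfl
    · right; rfl

lemma normal_form : ∀ p : P, NF p := by
  intro p
  have hp : p ∈ Subgroup.closure ({Xp, Yp} : Set P) := by
    rw [gen_set, PresentedGroup.closure_range_of]
    trivial
  induction hp using Subgroup.closure_induction_left with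
  | one => exact ⟨1, 1, one_mem _, Or.inl rfl, by group⟩
  | mul_left x hx y hy ih =>
    rcases hx with rfl | rfl
    · exact NF_stepX ih
    · exact NF_stepY ih
  | inv_mul_cancel x hx y hy ih =>
    rcases hx with rfl | rfl
    · rw [show Xp⁻¹ * y = ap⁻¹ * (Xp * y) from by simp only [ap]; group]
      exact NF_mul_left (inv_mem memNa) (NF_stepX ih)
    · rw [show Yp⁻¹ * y = bp⁻¹ * (Yp * y) from by simp only [bp]; group]
      exact NF_mul_left (inv_mem memNb) (NF_stepY ih)

lemma abc_mul (i j k i' j' k' : ℤ) :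
    (ap^i * bp^j * cp^k) * (ap^i' * bp^j' * cp^k') = ap^(i+i') * bp^(j+j') * cp^(k+k') := by
  have h1 : Commute (bp^j * cp^k) (ap^i') :=
    Commute.mul_left ((cAB.symm).zpow_zpow j i') ((cAC.symm).zpow_zpow k i')
  have h2 : Commute (cp^k) (bp^j') := (cBC.symm).zpow_zpow k j'
  calc (ap^i * bp^j * cp^k) * (ap^i' * bp^j' * cp^k')
      = ap^i * ((bp^j * cp^k) * ap^i') * (bp^j' * cp^k') := by group
    _ = ap^i * (ap^i' * (bp^j * cp^k)) * (bp^j' * cp^k') := by rw [h1.eq]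
    _ = (ap^i * ap^i') * bp^j * ((cp^k * bp^j') * cp^k') := by group
    _ = (ap^i * ap^i') * bp^j * ((bp^j' * cp^k) * cp^k') := by rw [h2.eq]
    _ = (ap^i * ap^i') * (bp^j * bp^j') * (cp^k * cp^k') := by group
    _ = ap^(i+i') * bp^(j+j') * cp^(k+k') := by rw [zpow_add, zpow_add, zpow_add]

lemma N_form : ∀ n ∈ N, ∃ i j k : ℤ, n = ap^i * bp^j * cp^k := by
  intro n hn
  induction hn using Subgroup.closure_induction with
  | mem g hg =>
    rcases hg with rfl | rfl | rfl
    · exact ⟨1, 0, 0, by simp⟩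
    · exact ⟨0, 1, 0, by simp⟩
    · exact ⟨0, 0, 1, by simp⟩
  | one => exact ⟨0, 0, 0, by simp⟩
  | mul u v hu hv ihu ihv =>
    obtain ⟨i, j, k, rfl⟩ := ihu
    obtain ⟨i', j', k', rfl⟩ := ihv
    exact ⟨i + i', j + j', k + k', abc_mul i j k i' j' k'⟩
  | inv u hu ihu =>
    obtain ⟨i, j, k, rfl⟩ := ihu
    refine ⟨-i, -j, -k, ?_⟩
    have h := abc_mul i j k (-i) (-j) (-k)
    simp only [add_neg_cancel, zpow_zero, mul_one, one_mul] at h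
    exact (inv_eq_of_mul_eq_one_right h)


/-! ### The homomorphism to `G6` -/

lemma aff_s1 : affx * (affy * affy) = (affy * affy)⁻¹ * affx :=
  eq_inv_mul_iff_mul_eq.mpr aff_rel1

lemma aff_s2 : affy * (affx * affx) = (affx * affx)⁻¹ * affy :=
  eq_inv_mul_iff_mul_eq.mpr aff_rel2

lemma aff_r1 : affx * affy ^ 2 * affx⁻¹ * affy ^ 2 = 1 := by
  rw [pow_two, aff_s1]; group

lemma aff_r2 : affy * affx ^ 2 * affy⁻¹ * affx ^ 2 = 1 := by
  rw [pow_two, aff_s2]; group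

lemma g6r1 : xg * yg ^ 2 * xg⁻¹ * yg ^ 2 = 1 := by
  apply Subtype.ext
  show affx * affy ^ 2 * affx⁻¹ * affy ^ 2 = 1
  exact aff_r1

lemma g6r2 : yg * xg ^ 2 * yg⁻¹ * xg ^ 2 = 1 := by
  apply Subtype.ext
  show affy * affx ^ 2 * affy⁻¹ * affx ^ 2 = 1
  exact aff_r2

noncomputable def f : Fin 2 → G6 := ![xg, yg]

lemma relsG : ∀ r ∈ hwRels, FreeGroup.lift f r = 1 := by
  intro r hr
  rcases hr with rfl | rfl
  · simp only [map_mul, map_pow, map_inv, FreeGroup.lift_apply_of]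
    simpa [f] using g6r1
  · simp only [map_mul, map_pow, map_inv, FreeGroup.lift_apply_of]
    simpa [f] using g6r2

noncomputable def φ : P →* G6 := PresentedGroup.toGroup relsG

lemma φX : φ Xp = xg := by
  show PresentedGroup.toGroup relsG (PresentedGroup.of 0) = xg
  rw [PresentedGroup.toGroup.of]
  simp [f]

lemma φY : φ Yp = yg := by
  show PresentedGroup.toGroup relsG (PresentedGroup.of 1) = yg
  rw [PresentedGroup.toGroup.of]
  simp [f]

lemma φ_surj : Function.Surjective φ := by
  rintro ⟨gv, hgv⟩
  have hgv' : gv ∈ Subgroup.closure ({affx, affy} : Set Aff3) := hgv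
  have : ∃ p : P, ((φ p : G6) : Aff3) = gv := by
    induction hgv' using Subgroup.closure_induction with
    | mem g hg =>
      rcases hg with rfl | rfl
      · exact ⟨Xp, by rw [φX]; rfl⟩
      · exact ⟨Yp, by rw [φY]; rfl⟩
    | one => exact ⟨1, by simp⟩
    | mul u v hu hv ihu ihv =>
      obtain ⟨p, hp⟩ := ihu hu
      obtain ⟨q, hq⟩ := ihv hv
      exact ⟨p * q, by rw [map_mul]; push_cast [hp, hq]; rfl⟩
    | inv u hu ihu =>
      obtain ⟨p, hp⟩ := ihu hu
      exact ⟨p⁻¹, by rw [map_inv]; push_cast; rw [hp]⟩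
  obtain ⟨p, hp⟩ := this
  exact ⟨p, Subtype.ext hp⟩


lemma vxg : ((xg : G6) : Aff3) = affx := rfl
lemma vyg : ((yg : G6) : Aff3) = affy := rfl

lemma cvm (v w : V3) : AffineEquiv.constVAdd ℝ V3 v * AffineEquiv.constVAdd ℝ V3 w
    = AffineEquiv.constVAdd ℝ V3 (v + w) := by
  rw [AffineEquiv.constVAdd_add, AffineEquiv.mul_def]

lemma val_a : ((φ ap : G6) : Aff3) = AffineEquiv.constVAdd ℝ V3 ![1,0,0] := by
  have : φ ap = xg * xg := by rw [ap, map_mul, φX]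
  rw [this]
  push_cast
  exact affxx

lemma val_b : ((φ bp : G6) : Aff3) = AffineEquiv.constVAdd ℝ V3 ![0,1,0] := by
  have : φ bp = yg * yg := by rw [bp, map_mul, φY]
  rw [this]
  push_cast
  exact affyy

lemma val_c : ((φ cp : G6) : Aff3) = AffineEquiv.constVAdd ℝ V3 ![0,0,1] := by
  have : φ cp = xg * yg * (xg * yg) := by simp only [cp, map_mul, φX, φY]
  rw [this]
  push_cast
  exact affzz

lemma keyval (i j k : ℤ) : ((φ (ap^i * bp^j * cp^k) : G6) : Aff3)
    = AffineEquiv.constVAdd ℝ V3 (i • ![1,0,0] + (j • ![0,1,0] + k • ![0,0,1])) := by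
  rw [map_mul, map_mul, map_zpow, map_zpow, map_zpow]
  push_cast
  rw [val_a, val_b, val_c,
    ← AffineEquiv.constVAdd_zsmul, ← AffineEquiv.constVAdd_zsmul, ← AffineEquiv.constVAdd_zsmul,
    cvm, cvm, add_assoc]

lemma int_half_absurd (i : ℤ) (h : (i : ℝ) + 1/2 = 0) : False := by
  have h2 : ((2 * i + 1 : ℤ) : ℝ) = 0 := by push_cast; linarith
  have h3 : (2 * i + 1 : ℤ) = 0 := by exact_mod_cast h2
  omega

lemma ker_triv : ∀ p : P, φ p = 1 → p = 1 := by
  intro p hp1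
  obtain ⟨n, w, hn, hw, rfl⟩ := normal_form p
  obtain ⟨i, j, k, rfl⟩ := N_form n hn
  have hv : ((φ (ap^i * bp^j * cp^k * w) : G6) : Aff3) = 1 := by rw [hp1]; rfl
  rw [map_mul] at hv
  push_cast at hv
  rw [keyval] at hv
  rcases hw with rfl | rfl | rfl | rfl
  · -- w = 1 : translation by the vector must be trivial, so i = j = k = 0
    rw [map_one] at hv
    push_cast at hv
    rw [mul_one] at hv
    have h0 : (AffineEquiv.constVAdd ℝ V3
        (i • ![1,0,0] + (j • ![0,1,0] + k • ![0,0,1]))) (0 : V3) = (0 : V3) := by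
      rw [hv]; rfl
    have hi : (i : ℝ) = 0 := by
      have := congrFun h0 0
      simpa [AffineEquiv.constVAdd_apply, vadd_eq_add, Pi.add_apply, Pi.smul_apply,
        zsmul_eq_mul] using this
    have hj : (j : ℝ) = 0 := by
      have := congrFun h0 1
      simpa [AffineEquiv.constVAdd_apply, vadd_eq_add, Pi.add_apply, Pi.smul_apply,
        zsmul_eq_mul] using this
    have hk : (k : ℝ) = 0 := by
      have := congrFun h0 2
      simpa [AffineEquiv.constVAdd_apply, vadd_eq_add, Pi.add_apply, Pi.smul_apply,
        zsmul_eq_mul] using this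
    have : i = 0 := by exact_mod_cast hi
    subst this
    have : j = 0 := by exact_mod_cast hj
    subst this
    have : k = 0 := by exact_mod_cast hk
    subst this
    simp
  · -- w = Xp : contradiction
    exfalso
    rw [φX, vxg] at hv
    have h0 : (AffineEquiv.constVAdd ℝ V3
        (i • ![1,0,0] + (j • ![0,1,0] + k • ![0,0,1])) * affx) (0 : V3) = (0 : V3) := by
      rw [hv]; rfl
    have := congrFun h0 0
    simp only [AffineEquiv.coe_mul, Function.comp_apply, AffineEquiv.constVAdd_apply,
      vadd_eq_add, Pi.add_apply, Pi.smul_apply, zsmul_eq_mul, affx_apply] at this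
    apply int_half_absurd i
    simpa using this
  · -- w = Yp : contradiction
    exfalso
    rw [φY, vyg] at hv
    have h0 : (AffineEquiv.constVAdd ℝ V3
        (i • ![1,0,0] + (j • ![0,1,0] + k • ![0,0,1])) * affy) (0 : V3) = (0 : V3) := by
      rw [hv]; rfl
    have := congrFun h0 1
    simp only [AffineEquiv.coe_mul, Function.comp_apply, AffineEquiv.constVAdd_apply,
      vadd_eq_add, Pi.add_apply, Pi.smul_apply, zsmul_eq_mul, affy_apply] at this
    apply int_half_absurd j
    simpa using this
  · -- w = Xp * Yp : contradiction
    exfalso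
    rw [map_mul, φX, φY] at hv
    push_cast at hv
    rw [vxg, vyg] at hv
    have h0 : (AffineEquiv.constVAdd ℝ V3
        (i • ![1,0,0] + (j • ![0,1,0] + k • ![0,0,1])) * (affx * affy)) (0 : V3) = (0 : V3) := by
      rw [hv]; rfl
    have := congrFun h0 0
    simp only [AffineEquiv.coe_mul, Function.comp_apply, AffineEquiv.constVAdd_apply,
      vadd_eq_add, Pi.add_apply, Pi.smul_apply, zsmul_eq_mul, affx_apply, affy_apply] at this
    apply int_half_absurd i
    simpa using this


lemma φ_bij : Function.Bijective φ :=
  ⟨(injective_iff_map_eq_one φ).2 ker_triv, φ_surj⟩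

end HW

/-- The homomorphism from `⟨x, y | xy²x⁻¹y² = 1, yx²y⁻¹x² = 1⟩` to `G₆`
sending the generator `x` to `(½e₁, X)` and the generator `y` to `(½(e₂−e₃), Y)`
is an isomorphism of groups. -/
theorem statement0 :
    ∃ φ : PresentedGroup hwRels ≃* G6,
      φ (PresentedGroup.of 0) = xg ∧ φ (PresentedGroup.of 1) = yg := by
  refine ⟨MulEquiv.ofBijective HW.φ HW.φ_bij, ?_, ?_⟩
  · exact HW.φX
  · exact HW.φY
end

section
/- The conjugation homomorphism from the normalizer N = N_{Aff(3)}(G₆) of G₆ in Aff(3) to Aut(G₆), sending n ∈ N to the automorphism g ↦ ngn⁻¹ of G₆, is an isomorphism of groups (it is injective because the centralizer of G₆ in Aff(3) is trivial, and surjective because every automorphism of the fundamental group of a flat manifold is induced by conjugation in the affine group). -/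
/-!
Every element of `G₆` is an affine map `w ↦ D w + t` with `D ∈ {I, X, Y, Z}` and `t` congruent
modulo `ℤ³` to the translation part of `1, x, y, z` respectively. Hence `G₆` has no elements of
order two, its translations commute, and it contains the lattice translations `x², y², z²`.

Injectivity: an affine map commuting with the lattice translations is a translation, and a
translation commuting with `x` and `y` is trivial, so the centralizer of `G₆` is trivial.

Surjectivity: let `φ ∈ Aut(G₆)`. If `φ` sent the middle element of one of the relations
`y²xy² = x`, `x²yx² = y`, `x²zx² = z` to a translation, the square of the image of the outer
element would commute with it and so square to `1`; having no elements of order two, `G₆` would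
then force the outer element to be trivial. So the linear
parts of `φ x` and `φ y` are distinct elements of `{X, Y, Z}`; these are carried to `X, Y` by a
permutation of coordinates, and a monomial affine map then conjugates `(x, y)` to `(φ x, φ y)`.
That map normalizes `G₆` and induces `φ`.
-/

namespace HantzscheWendt

def HalfParity (b : Bool) (r : ℝ) : Prop := ∃ k : ℤ, r = k + b.toNat / 2

namespace HalfParity

variable {b c : Bool} {r s : ℝ}

lemma add (hr : HalfParity b r) (hs : HalfParity c s) : HalfParity (xor b c) (r + s) := by
  obtain ⟨k, rfl⟩ := hr
  obtain ⟨m, rfl⟩ := hs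
  cases b <;> cases c
  exacts [⟨k + m, by simp⟩, ⟨k + m, by simp; ring⟩, ⟨k + m, by simp; ring⟩,
    ⟨k + m + 1, by simp; ring⟩]

lemma neg (hr : HalfParity b r) : HalfParity b (-r) := by
  obtain ⟨k, rfl⟩ := hr
  cases b
  exacts [⟨-k, by simp⟩, ⟨-k - 1, by simp; ring⟩]

lemma sub (hr : HalfParity b r) (hs : HalfParity c s) : HalfParity (xor b c) (r - s) :=
  sub_eq_add_neg r s ▸ hr.add hs.neg

lemma units_mul {ε : ℤ} (hε : ε = 1 ∨ ε = -1) (hr : HalfParity b r) :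
    HalfParity b (ε * r) := by
  rcases hε with rfl | rfl
  · simpa using hr
  · simpa using hr.neg

lemma ne_zero (hr : HalfParity true r) : r ≠ 0 := by
  obtain ⟨k, rfl⟩ := hr
  intro h
  simp only [Bool.toNat_true, Nat.cast_one, one_div] at h
  have : (2 * k + 1 : ℤ) = 0 := by exact_mod_cast (by linarith : (2 * k + 1 : ℝ) = 0)
  omega

end HalfParity

/-- Diagonals of the linear parts `I, X, Y, Z`. The point group of `G₆` is the Klein four-group,
indexed by `Fin 4` so that its multiplication is `^^^`. -/
def sgn : Fin 4 → Fin 3 → ℤ := ![![1, 1, 1], ![1, -1, -1], ![-1, 1, -1], ![-1, -1, 1]]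

/-- The coordinates in which the translation parts of elements of `G₆` with linear part
`diag (sgn j)` lie in `ℤ + ½` rather than in `ℤ`. -/
def halfMask : Fin 4 → Fin 3 → Bool :=
  ![![false, false, false], ![true, false, false], ![false, true, true], ![true, true, true]]

lemma sgn_xor : ∀ j k i, sgn (j ^^^ k) i = sgn j i * sgn k i := by decide

lemma sgn_mul_self : ∀ j i, sgn j i * sgn j i = 1 := by decide

lemma sgn_eq_one_or : ∀ j i, sgn j i = 1 ∨ sgn j i = -1 := by decide

lemma halfMask_xor : ∀ j k i, halfMask (j ^^^ k) i = xor (halfMask j i) (halfMask k i) := by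
  decide

lemma exists_sgn_eq_one_halfMask :
    ∀ j, j ≠ 0 → ∃ i, sgn j i = 1 ∧ halfMask j i = true := by
  decide

/-- `g` lies in the coset of the translation lattice `ℤ³` in `G₆` with linear part
`diag (sgn j)`. -/
structure InCoset (j : Fin 4) (g : Aff3) : Prop where
  apply_eq : ∀ w i, g w i = sgn j i * w i + g 0 i
  parity : ∀ i, HalfParity (halfMask j i) (g 0 i)

namespace InCoset

variable {j k : Fin 4} {g h : Aff3}

lemma one : InCoset 0 1 where
  apply_eq w i := by fin_cases i <;> simp [sgn]
  parity i := ⟨0, by fin_cases i <;> simp [halfMask]⟩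

lemma mul (hg : InCoset j g) (hh : InCoset k h) : InCoset (j ^^^ k) (g * h) := by
  have h0 : ∀ i, (g * h) 0 i = sgn j i * h 0 i + g 0 i := fun i => hg.apply_eq (h 0) i
  refine ⟨fun w i => ?_, fun i => ?_⟩
  · rw [h0, AffineEquiv.coe_mul, Function.comp_apply, hg.apply_eq, hh.apply_eq, sgn_xor]
    push_cast; ring
  · rw [h0, halfMask_xor, Bool.xor_comm]
    exact ((hh.parity i).units_mul (sgn_eq_one_or j i)).add (hg.parity i)

lemma inv (hg : InCoset j g) : InCoset j g⁻¹ := by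
  have hsq : ∀ i, (sgn j i : ℝ) * sgn j i = 1 := fun i => by exact_mod_cast sgn_mul_self j i
  have key : ∀ w i, g⁻¹ w i = sgn j i * (w i - g 0 i) := fun w i => by
    have := congrFun (g.apply_symm_apply w) i
    rw [hg.apply_eq] at this
    rw [AffineEquiv.inv_def, ← this, add_sub_cancel_right, ← mul_assoc, hsq, one_mul]
  refine ⟨fun w i => ?_, fun i => ?_⟩
  · rw [key, key, Pi.zero_apply, zero_sub, mul_neg]
    ring
  · rw [key, Pi.zero_apply, zero_sub, mul_neg]
    exact ((hg.parity i).units_mul (sgn_eq_one_or j i)).neg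

lemma eq_one_of_mul_self (hg : InCoset j g) (h2 : g * g = 1) : g = 1 := by
  have hfix : ∀ i, sgn j i * g 0 i + g 0 i = 0 := fun i => by
    have := congrFun (congrArg (fun e : Aff3 => e 0) h2) i
    rwa [AffineEquiv.coe_mul, Function.comp_apply, hg.apply_eq] at this
  by_cases hj : j = 0
  · subst hj
    have ht : ∀ i, g 0 i = 0 := fun i => by
      have := hfix i
      fin_cases i <;> simp [sgn] at this ⊢ <;> linarith
    ext w i
    rw [hg.apply_eq, ht]
    fin_cases i <;> simp [sgn]
  · obtain ⟨i, hi, hhalf⟩ := exists_sgn_eq_one_halfMask j hj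
    have := hfix i
    rw [hi, Int.cast_one, one_mul] at this
    exact absurd (by linarith) (hhalf ▸ hg.parity i).ne_zero

lemma commute_of_zero (hg : InCoset 0 g) (hh : InCoset 0 h) : Commute g h := by
  have htr : ∀ {e : Aff3}, InCoset 0 e → ∀ w i, e w i = w i + e 0 i := fun he w i => by
    rw [he.apply_eq]; fin_cases i <;> simp [sgn]
  ext w i
  rw [AffineEquiv.coe_mul, AffineEquiv.coe_mul, Function.comp_apply, Function.comp_apply,
    htr hg (h w), htr hh w, htr hh (g w), htr hg w]
  ring

end InCoset

lemma affx_apply (w : V3) : affx w = ![w 0 + 1 / 2, -w 1, -w 2] := by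
  funext i; fin_cases i <;> simp [affx, diagLin, add_comm]

lemma affy_apply (w : V3) : affy w = ![-w 0, w 1 + 1 / 2, -w 2 - 1 / 2] := by
  funext i; fin_cases i <;> simp [affy, diagLin, add_comm]; ring

lemma inCoset_affx : InCoset 1 affx where
  apply_eq w i := by fin_cases i <;> simp [affx_apply, sgn]
  parity i := by
    fin_cases i <;> simp [affx_apply, halfMask]
    exacts [⟨0, by norm_num⟩, ⟨0, by simp⟩, ⟨0, by simp⟩]

lemma inCoset_affy : InCoset 2 affy where
  apply_eq w i := by fin_cases i <;> simp [affy_apply, sgn, sub_eq_add_neg]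
  parity i := by
    fin_cases i <;> simp [affy_apply, halfMask]
    exacts [⟨0, by simp⟩, ⟨0, by norm_num⟩, ⟨-1, by norm_num⟩]

lemma exists_inCoset_of_mem {g : Aff3} (hg : g ∈ G6) : ∃ j, InCoset j g := by
  induction hg using Subgroup.closure_induction with
  | mem g hg =>
    rcases hg with rfl | rfl
    exacts [⟨1, inCoset_affx⟩, ⟨2, inCoset_affy⟩]
  | one => exact ⟨0, .one⟩
  | mul g h _ _ hg hh =>
    obtain ⟨j, hj⟩ := hg
    obtain ⟨k, hk⟩ := hh
    exact ⟨j ^^^ k, hj.mul hk⟩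
  | inv g _ hg =>
    obtain ⟨j, hj⟩ := hg
    exact ⟨j, hj.inv⟩

lemma eq_one_of_sq_mul_mul_sq {h t : G6} (ht : InCoset 0 (t : Aff3))
    (hrel : h * h * t * (h * h) = t) : h = 1 := by
  obtain ⟨j, hj⟩ := exists_inCoset_of_mem h.2
  have hsq : InCoset 0 ((h : Aff3) * h) := Fin.xor_self j ▸ hj.mul hj
  have hrel' : (h : Aff3) * h * t * (h * h) = t := by simpa using congrArg Subtype.val hrel
  set s : Aff3 := (h : Aff3) * h
  have h4 : s * s = 1 := by
    rw [← mul_eq_right (b := (t : Aff3))]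
    calc s * s * t = s * (t * s) := by rw [(ht.commute_of_zero hsq).eq, mul_assoc]
      _ = t := by rw [← mul_assoc, hrel']
  exact Subtype.ext (hj.eq_one_of_mul_self (hsq.eq_one_of_mul_self h4))

lemma yg_sq_mul_xg_mul_yg_sq : yg * yg * xg * (yg * yg) = xg := by
  ext w i
  fin_cases i <;> simp [xg, yg, affx_apply, affy_apply]

lemma xg_sq_mul_yg_mul_xg_sq : xg * xg * yg * (xg * xg) = yg := by
  ext w i
  fin_cases i <;> simp [xg, yg, affx_apply, affy_apply]; ring

lemma xg_sq_mul_zg_mul_xg_sq : xg * xg * zg * (xg * xg) = zg := by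
  ext w i
  fin_cases i <;> simp [xg, yg, zg, affx_apply, affy_apply]

lemma apply_eq_linear_add (e : Aff3) (w : V3) : e w = e.linear w + e 0 :=
  congrFun e.toAffineMap.decomp w

lemma linear_apply_of_commute_constVAdd {n : Aff3} {v : V3}
    (h : Commute n (AffineEquiv.constVAdd ℝ V3 v)) : n.linear v = v := by
  have h0 := congrArg (fun e : Aff3 => e 0) h.eq
  simp only [AffineEquiv.coe_mul, Function.comp_apply, AffineEquiv.constVAdd_apply,
    vadd_eq_add, add_zero] at h0
  rw [apply_eq_linear_add] at h0
  exact add_right_cancel h0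

lemma affx_mul_self : affx * affx = AffineEquiv.constVAdd ℝ V3 (Pi.single 0 1) := by
  ext w i
  fin_cases i <;> simp [affx_apply]; ring

lemma affy_mul_self : affy * affy = AffineEquiv.constVAdd ℝ V3 (Pi.single 1 1) := by
  ext w i
  fin_cases i <;> simp [affy_apply]; ring

lemma affz_mul_self : affz * affz = AffineEquiv.constVAdd ℝ V3 (Pi.single 2 1) := by
  ext w i
  fin_cases i <;> simp [affz, affx_apply, affy_apply]; ring

lemma constVAdd_single_mem (i : Fin 3) : AffineEquiv.constVAdd ℝ V3 (Pi.single i 1) ∈ G6 := by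
  have hz : affz ∈ G6 := mul_mem affx_mem affy_mem
  fin_cases i
  · exact affx_mul_self ▸ mul_mem affx_mem affx_mem
  · exact affy_mul_self ▸ mul_mem affy_mem affy_mem
  · exact affz_mul_self ▸ mul_mem hz hz

theorem centralizer_G6 : Subgroup.centralizer (G6 : Set Aff3) = ⊥ := by
  refine eq_bot_iff.2 fun n hn => ?_
  rw [Subgroup.mem_centralizer_iff] at hn
  have hlin : n.linear = LinearEquiv.refl ℝ V3 :=
    (Pi.basisFun ℝ (Fin 3)).ext' fun i => by
      simpa using linear_apply_of_commute_constVAdd (hn _ (constVAdd_single_mem i)).symm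
  have htr : ∀ w, n w = w + n 0 := fun w => by rw [apply_eq_linear_add, hlin]; rfl
  have hx := congrArg (fun e : Aff3 => e 0) (hn affx affx_mem)
  have hy := congrArg (fun e : Aff3 => e 0) (hn affy affy_mem)
  simp only [AffineEquiv.coe_mul, Function.comp_apply] at hx hy
  rw [htr (affx 0), affx_apply, affx_apply] at hx
  rw [htr (affy 0), affy_apply, affy_apply] at hy
  have hc : n 0 = 0 := by
    have h0 := congrFun hy 0
    have h1 := congrFun hx 1
    have h2 := congrFun hx 2
    simp only [Pi.add_apply, Pi.zero_apply, Matrix.cons_val_zero, Matrix.cons_val_one,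
      Matrix.cons_val, neg_zero, zero_add, zero_sub] at h0 h1 h2
    funext i
    fin_cases i <;> simp <;> linarith
  ext w
  rw [htr, hc, add_zero]
  rfl

lemma exists_conj_affx_affy {a b : Aff3} (π : Equiv.Perm (Fin 3))
    (ha : ∀ w i, a w i = sgn 1 (π i) * w i + a 0 i)
    (hb : ∀ w i, b w i = sgn 2 (π i) * w i + b 0 i)
    (hc : ∀ i, ![a 0 i, b 0 i, a 0 i - b 0 i] (π i) ≠ 0) :
    ∃ n : Aff3, n * affx * n⁻¹ = a ∧ n * affy * n⁻¹ = b := by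
  -- Comparing `n x = a n` and `n y = b n` coordinate by coordinate, according to the value of
  -- `π i`, forces these scalars `c` and translation part `v` of `n w = (c i * w (π i))ᵢ + v`.
  let c : Fin 3 → ℝ := fun i => 2 * ![a 0 i, b 0 i, a 0 i - b 0 i] (π i)
  let v : V3 := fun i => ![b 0 i / 2, a 0 i / 2, a 0 i / 2] (π i)
  let A : V3 ≃ₗ[ℝ] V3 := (LinearEquiv.funCongrLeft ℝ ℝ π).trans <|
    LinearEquiv.piCongrRight fun i => LinearEquiv.smulOfNeZero ℝ ℝ (c i) (by simp [c, hc i])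
  let n : Aff3 := A.toAffineEquiv.trans (AffineEquiv.constVAdd ℝ V3 v)
  have hn : ∀ w i, n w i = c i * w (π i) + v i := fun w i => add_comm _ _
  refine ⟨n, mul_inv_eq_of_eq_mul ?_, mul_inv_eq_of_eq_mul ?_⟩ <;> ext w i <;>
    simp only [AffineEquiv.coe_mul, Function.comp_apply]
  · rw [hn, ha, hn]
    simp only [c, v]
    generalize π i = k
    fin_cases k <;> simp [sgn, affx_apply] <;> ring
  · rw [hn, hb, hn]
    simp only [c, v]
    generalize π i = k
    fin_cases k <;> simp [sgn, affy_apply] <;> ring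

lemma exists_perm_sgn_halfMask : ∀ ja jb : Fin 4, ja ≠ 0 → jb ≠ 0 → ja ≠ jb →
    ∃ π : Equiv.Perm (Fin 3), ∀ i, sgn ja i = sgn 1 (π i) ∧ sgn jb i = sgn 2 (π i) ∧
      ![halfMask ja i, halfMask jb i, xor (halfMask ja i) (halfMask jb i)] (π i) = true := by
  decide

lemma exists_conj_of_inCoset {ja jb : Fin 4} {a b : Aff3} (ha : InCoset ja a)
    (hb : InCoset jb b) (hja : ja ≠ 0) (hjb : jb ≠ 0) (hab : ja ≠ jb) :
    ∃ n : Aff3, n * affx * n⁻¹ = a ∧ n * affy * n⁻¹ = b := by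
  obtain ⟨π, hπ⟩ := exists_perm_sgn_halfMask ja jb hja hjb hab
  refine exists_conj_affx_affy π (fun w i => ?_) (fun w i => ?_) (fun i => ?_)
  · rw [ha.apply_eq, (hπ i).1]
  · rw [hb.apply_eq, (hπ i).2.1]
  · have hpar : ∀ k : Fin 3, HalfParity
        (![halfMask ja i, halfMask jb i, xor (halfMask ja i) (halfMask jb i)] k)
        (![a 0 i, b 0 i, a 0 i - b 0 i] k) := by
      intro k
      fin_cases k
      exacts [ha.parity i, hb.parity i, (ha.parity i).sub (hb.parity i)]
    exact ((hπ i).2.2 ▸ hpar (π i)).ne_zero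

lemma xg_ne_one : xg ≠ 1 := fun h => by
  simpa [xg, affx_apply] using congrArg (fun g : G6 => (g : Aff3) 0 0) h

lemma yg_ne_one : yg ≠ 1 := fun h => by
  simpa [yg, affy_apply] using congrArg (fun g : G6 => (g : Aff3) 0 1) h

lemma closure_xg_yg : Subgroup.closure ({xg, yg} : Set G6) = ⊤ := by
  have hpre : ((↑) : G6 → Aff3) ⁻¹' {affx, affy} = {xg, yg} := by
    ext g
    simp [xg, yg, Subtype.ext_iff]
  exact hpre ▸ Subgroup.closure_closure_coe_preimage

lemma closure_aut_xg_yg (φ : MulAut G6) :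
    Subgroup.closure {((φ xg : G6) : Aff3), ((φ yg : G6) : Aff3)} = G6 := by
  have h := (G6.subtype.comp (φ : G6 →* G6)).map_closure {xg, yg}
  rw [closure_xg_yg, ← MonoidHom.range_eq_map, MonoidHom.range_comp,
    MonoidHom.range_eq_top.2 φ.surjective, ← MonoidHom.range_eq_map, Subgroup.range_subtype,
    Set.image_pair] at h
  exact h.symm

lemma exists_conj_eq_aut (φ : MulAut G6) :
    ∃ n : Aff3, n * affx * n⁻¹ = φ xg ∧ n * affy * n⁻¹ = φ yg := by
  obtain ⟨ja, ha⟩ := exists_inCoset_of_mem (φ xg).2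
  obtain ⟨jb, hb⟩ := exists_inCoset_of_mem (φ yg).2
  have hx : φ xg ≠ 1 := by simpa using xg_ne_one
  have hy : φ yg ≠ 1 := by simpa using yg_ne_one
  refine exists_conj_of_inCoset ha hb ?_ ?_ ?_
  · rintro rfl
    exact hy (eq_one_of_sq_mul_mul_sq ha (by simpa using congrArg φ yg_sq_mul_xg_mul_yg_sq))
  · rintro rfl
    exact hx (eq_one_of_sq_mul_mul_sq hb (by simpa using congrArg φ xg_sq_mul_yg_mul_xg_sq))
  · rintro rfl
    have hz : InCoset 0 (φ zg : Aff3) := by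
      rw [zg, map_mul, Subgroup.coe_mul, ← Fin.xor_self ja]
      exact ha.mul hb
    exact hx (eq_one_of_sq_mul_mul_sq hz (by simpa using congrArg φ xg_sq_mul_zg_mul_xg_sq))

theorem normalizerMonoidHom_G6_injective : Function.Injective G6.normalizerMonoidHom := by
  rw [← MonoidHom.ker_eq_bot_iff, Subgroup.normalizerMonoidHom_ker, centralizer_G6,
    Subgroup.bot_subgroupOf]

theorem normalizerMonoidHom_G6_surjective : Function.Surjective G6.normalizerMonoidHom := by
  intro φ
  obtain ⟨n, hx, hy⟩ := exists_conj_eq_aut φ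
  have hn : n ∈ Subgroup.normalizer (G6 : Set Aff3) := by
    rw [Subgroup.mem_normalizer_iff_map_conj_eq]
    calc (Subgroup.closure {affx, affy}).map (MulAut.conj n : Aff3 →* Aff3)
        _ = Subgroup.closure {((φ xg : G6) : Aff3), ((φ yg : G6) : Aff3)} := by
          rw [MonoidHom.map_closure, Set.image_pair]
          simp [MulAut.conj_apply, hx, hy]
        _ = G6 := closure_aut_xg_yg φ
  refine ⟨⟨n, hn⟩, MulEquiv.toMonoidHom_injective <|
    MonoidHom.eq_of_eqOn_dense closure_xg_yg ?_⟩
  rintro g (rfl | rfl)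
  exacts [Subtype.ext hx, Subtype.ext hy]

end HantzscheWendt

/-- The conjugation homomorphism from the normalizer `N = N_{Aff(3)}(G₆)`
to `Aut(G₆)`, sending `n ∈ N` to the automorphism `g ↦ ngn⁻¹` of `G₆`, is an
isomorphism of groups. -/
theorem statement6 :
    ∃ Φ : (Subgroup.normalizer (G6 : Set Aff3)) →* MulAut G6,
      (∀ (n : (Subgroup.normalizer (G6 : Set Aff3))) (g : G6), ((Φ n g : G6) : Aff3) = n * g * (n : Aff3)⁻¹) ∧
      Function.Bijective Φ :=
  ⟨G6.normalizerMonoidHom, fun _ _ => rfl, HantzscheWendt.normalizerMonoidHom_G6_injective,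
    HantzscheWendt.normalizerMonoidHom_G6_surjective⟩
end

section
/- For every even integer e and η ∈ {1,−1}, the group Γ(e,η) is isomorphic to the group with presentation ⟨u, v, z | zuz⁻¹ = v, zvz⁻¹ = v⁻¹u⁻¹z^{3η−3}, vuv⁻¹u⁻¹ = z^{3ηq}⟩, where q = 3e − η − 2; explicitly, the homomorphism from this presented group to Γ(e,η) sending u ↦ z⁻¹x, v ↦ xz⁻¹ and z ↦ z is an isomorphism. -/
/-! The group `Γ(e,η)` with presentation `⟨h, x, y, z | x³ = y³ = z^{3η} = h, xyz = hᵉ⟩`,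
for an even integer `e` and `η = ±1`.  Generator `0` is `h`, generator `1` is `x`,
generator `2` is `y` and generator `3` is `z`. -/

def gamRels (e η : ℤ) : Set (FreeGroup (Fin 4)) :=
  { (FreeGroup.of 1) ^ 3 * (FreeGroup.of 0)⁻¹,
    (FreeGroup.of 2) ^ 3 * (FreeGroup.of 0)⁻¹,
    (FreeGroup.of 3) ^ (3 * η) * (FreeGroup.of 0)⁻¹,
    FreeGroup.of 1 * FreeGroup.of 2 * FreeGroup.of 3 * ((FreeGroup.of 0) ^ e)⁻¹ }

/-- The group `Γ(e,η)`. -/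
abbrev Gam (e η : ℤ) : Type := PresentedGroup (gamRels e η)

/-- The image of the generator `h` in `Γ(e,η)`. -/
def hG (e η : ℤ) : Gam e η := PresentedGroup.of 0
/-- The image of the generator `x` in `Γ(e,η)`. -/
def xG (e η : ℤ) : Gam e η := PresentedGroup.of 1
/-- The image of the generator `y` in `Γ(e,η)`. -/
def yG (e η : ℤ) : Gam e η := PresentedGroup.of 2
/-- The image of the generator `z` in `Γ(e,η)`. -/
def zG (e η : ℤ) : Gam e η := PresentedGroup.of 3

/-- `u = z⁻¹x`. -/
def uG (e η : ℤ) : Gam e η := (zG e η)⁻¹ * xG e η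
/-- `v = xz⁻¹`. -/
def vG (e η : ℤ) : Gam e η := xG e η * (zG e η)⁻¹

/-- The relations of the presentation `⟨u, v, z | zuz⁻¹ = v, zvz⁻¹ = v⁻¹u⁻¹z^{3η−3},
vuv⁻¹u⁻¹ = z^{3ηq}⟩`, where `q = 3e − η − 2`.  Generator `0` is `u`, generator `1`
is `v` and generator `2` is `z`. -/
def nilRels (e η : ℤ) : Set (FreeGroup (Fin 3)) :=
  { FreeGroup.of 2 * FreeGroup.of 0 * (FreeGroup.of 2)⁻¹ * (FreeGroup.of 1)⁻¹,
    FreeGroup.of 2 * FreeGroup.of 1 * (FreeGroup.of 2)⁻¹ *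
      ((FreeGroup.of 1)⁻¹ * (FreeGroup.of 0)⁻¹ * (FreeGroup.of 2) ^ (3 * η - 3))⁻¹,
    FreeGroup.of 1 * FreeGroup.of 0 * (FreeGroup.of 1)⁻¹ * (FreeGroup.of 0)⁻¹ *
      ((FreeGroup.of 2) ^ (3 * η * (3 * e - η - 2)))⁻¹ }

/-- Images of the generators `u`, `v`, `z` in `Γ(e,η)`. -/
def fwdGen (e η : ℤ) : Fin 3 → Gam e η := ![uG e η, vG e η, zG e η]

/-- Images of the generators `h`, `x`, `y`, `z` in the nilpotent presentation. -/
def bwdGen (e η : ℤ) : Fin 4 → PresentedGroup (nilRels e η) :=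
  ![(PresentedGroup.of 2)^(3*η), PresentedGroup.of 2 * PresentedGroup.of 0,
    (PresentedGroup.of 2 * PresentedGroup.of 0)⁻¹ * (PresentedGroup.of 2)^(3*η*e) *
      (PresentedGroup.of 2)⁻¹,
    PresentedGroup.of 2]

private lemma gam_rel2 {G : Type*} [Group G] (η : ℤ) (h x z : G)
    (hx : x^(3:ℕ) = h) (hz : z^(3*η) = h) :
    z*(x*z⁻¹)*z⁻¹ = (x*z⁻¹)⁻¹*(z⁻¹*x)⁻¹*z^(3*η-3) := by
  have hw : z^(3*η-3) = z⁻¹*(x^(3:ℕ)*z^(-2:ℤ)) := by rw [hx, ← hz]; group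
  rw [hw]; group

private lemma gam_comm {G : Type*} [Group G] (e η : ℤ) (hη2 : η*η = 1)
    (h x y z : G) (hx : x^(3:ℕ) = h) (hy : y^(3:ℕ) = h) (hz : z^(3*η) = h)
    (hxyz : x*y*z = h^e) :
    (x*z⁻¹)*(z⁻¹*x)*(x*z⁻¹)⁻¹*(z⁻¹*x)⁻¹ = z^(3*η*(3*e-η-2)) := by
  have chx : Commute h x := by rw [← hx]; exact (Commute.refl x).pow_left 3
  have chz : Commute h z := by rw [← hz]; exact (Commute.refl z).zpow_left _
  have sx : ∀ (m : ℤ) (w : G), h^m * (x * w) = x * (h^m * w) := fun m w => by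
    rw [← mul_assoc, (chx.zpow_left m).eq, mul_assoc]
  have sxi : ∀ (m : ℤ) (w : G), h^m * (x⁻¹ * w) = x⁻¹ * (h^m * w) := fun m w => by
    rw [← mul_assoc, ((chx.zpow_left m).inv_right).eq, mul_assoc]
  have sz : ∀ (m : ℤ) (w : G), h^m * (z * w) = z * (h^m * w) := fun m w => by
    rw [← mul_assoc, (chz.zpow_left m).eq, mul_assoc]
  have szi : ∀ (m : ℤ) (w : G), h^m * (z⁻¹ * w) = z⁻¹ * (h^m * w) := fun m w => by
    rw [← mul_assoc, ((chz.zpow_left m).inv_right).eq, mul_assoc]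
  have tx : ∀ (m : ℤ), h^m * x = x * h^m := fun m => (chx.zpow_left m).eq
  have txi : ∀ (m : ℤ), h^m * x⁻¹ = x⁻¹ * h^m := fun m => ((chx.zpow_left m).inv_right).eq
  have tz : ∀ (m : ℤ), h^m * z = z * h^m := fun m => (chz.zpow_left m).eq
  have tzi : ∀ (m : ℤ), h^m * z⁻¹ = z⁻¹ * h^m := fun m => ((chz.zpow_left m).inv_right).eq
  have hy' : y = x⁻¹ * h^e * z⁻¹ := by rw [← hxyz]; group
  have k1 : (x⁻¹ * h^e * z⁻¹)^(3:ℕ) = h := by rw [← hy']; exact hy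
  have k2 : (x⁻¹ * h^e * z⁻¹)^(3:ℕ)
      = x⁻¹*(z⁻¹*(x⁻¹*(z⁻¹*(x⁻¹*(z⁻¹*(h^e*(h^e*h^e))))))) := by
    simp only [pow_succ, pow_zero, one_mul, mul_assoc, sx, sxi, sz, szi, tx, txi, tz, tzi]
  have key : z*x*(z*x*(z*x)) = h^(3*e-1) := by
    have e1 : z*x*(z*x*(z*x))
        = (h^e*(h^e*h^e)) * (x⁻¹*(z⁻¹*(x⁻¹*(z⁻¹*(x⁻¹*(z⁻¹*(h^e*(h^e*h^e))))))))⁻¹ := by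
      group
    rw [e1, ← k2, k1]; group
  have k4 : x*z*x = z⁻¹*(h^(3*e-1)*(x⁻¹*z⁻¹)) := by rw [← key]; group
  have hR : z^(3*η*(3*e-η-2)) = h^(3*e-2-η) := by
    rw [show (3*η*(3*e-η-2) : ℤ) = (3*η)*(3*e-2-η) from by ring, zpow_mul, hz]
  have zinv3 : (z:G)⁻¹*(z⁻¹*z⁻¹) = h^(-η) := by
    rw [← hz, ← zpow_mul, show (3*η*(-η):ℤ) = -3 from by linear_combination (-3:ℤ)*hη2]
    group
  have ezi : ∀ w : G, z⁻¹*(z⁻¹*(z⁻¹*w)) = h^(-η)*w := fun w => by rw [← zinv3]; group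
  have exi : ∀ w : G, x⁻¹*(x⁻¹*(x⁻¹*w)) = h^(-1:ℤ)*w := fun w => by
    have : (x:G)⁻¹*(x⁻¹*x⁻¹) = h^(-1:ℤ) := by rw [← hx]; group
    rw [← this]; group
  calc (x*z⁻¹)*(z⁻¹*x)*(x*z⁻¹)⁻¹*(z⁻¹*x)⁻¹
      = x*(z⁻¹*(z⁻¹*((x*z*x)*(x⁻¹*(x⁻¹*(x⁻¹*z)))))) := by group
    _ = x*(z⁻¹*(z⁻¹*((z⁻¹*(h^(3*e-1)*(x⁻¹*z⁻¹)))*(x⁻¹*(x⁻¹*(x⁻¹*z)))))) := by rw [k4]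
    _ = h^(3*e-2-η) := by
        simp only [mul_assoc, sx, sxi, sz, szi, tx, txi, tz, tzi, ezi, exi,
          inv_mul_cancel_left, mul_inv_cancel_left, ← zpow_add]
        group
    _ = z^(3*η*(3*e-η-2)) := hR.symm

private lemma nil_aux {G : Type*} [Group G] (e η : ℤ) (hη2 : η*η = 1) (U V Z : G)
    (n1 : Z*U*Z⁻¹ = V)
    (n2 : Z*V*Z⁻¹ = V⁻¹*U⁻¹*Z^(3*η-3))
    (n3 : V*U*V⁻¹*U⁻¹ = Z^(3*η*(3*e-η-2))) :
    (Z*U)^(3:ℕ) = Z^(3*η) ∧ (U⁻¹*Z^(3*η*e-2))^(3:ℕ) = Z^(3*η) := by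
  have swap : ∀ (a b : G), a*b = b*a → ∀ w : G, a*(b*w) = b*(a*w) := fun a b hab w => by
    rw [← mul_assoc, hab, mul_assoc]
  have c1 : Z*U = V*Z := by rw [← n1]; group
  have cU' : Z*U⁻¹*Z⁻¹ = V⁻¹ := by rw [← n1]; group
  have cV' : Z*V⁻¹*Z⁻¹ = (V⁻¹*U⁻¹*Z^(3*η-3))⁻¹ := by rw [← n2]; group
  have D0 : (Z*U)^(3:ℕ) = Z^(3*η) := by
    calc (Z*U)^(3:ℕ) = V*((Z*V*Z⁻¹)*((Z*(Z*V*Z⁻¹)*Z⁻¹)*(Z*(Z*Z)))) := by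
          simp only [pow_succ, pow_zero, one_mul]; rw [c1]; group
      _ = V*((V⁻¹*U⁻¹*Z^(3*η-3))*((Z*(V⁻¹*U⁻¹*Z^(3*η-3))*Z⁻¹)*(Z*(Z*Z)))) := by rw [n2]
      _ = V*((V⁻¹*U⁻¹*Z^(3*η-3))*(((Z*V*Z⁻¹)⁻¹*((Z*U*Z⁻¹)⁻¹*Z^(3*η-3)))*(Z*(Z*Z)))) := by
          rw [show Z*(V⁻¹*U⁻¹*Z^(3*η-3))*Z⁻¹ = (Z*V*Z⁻¹)⁻¹*((Z*U*Z⁻¹)⁻¹*Z^(3*η-3)) from by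
            group]
      _ = Z^(3*η) := by rw [n1, n2]; group
  have cZU : Commute (Z^(3*η)) (Z*U) := by rw [← D0]; exact (Commute.refl _).pow_left 3
  have cHU : Commute (Z^(3*η)) U := by
    have h2 : Commute (Z^(3*η)) Z⁻¹ := ((Commute.refl Z).zpow_left _).inv_right
    have h3 := h2.mul_right cZU
    rwa [inv_mul_cancel_left] at h3
  have cHV : Commute (Z^(3*η)) V := by
    rw [← n1]; exact cZU.mul_right (((Commute.refl Z).zpow_left _).inv_right)
  have cPU : Commute (Z^(3*η*e-3)) U := by
    rw [show (3*η*e-3:ℤ) = (3*η)*(e-η) from by linear_combination (3:ℤ)*hη2, zpow_mul]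
    exact cHU.zpow_left _
  have cQU : Commute (Z^(6*η*e-6)) U := by
    rw [show (6*η*e-6:ℤ) = (3*η)*(2*e-2*η) from by linear_combination (6:ℤ)*hη2, zpow_mul]
    exact cHU.zpow_left _
  have cwU : Commute (Z^(3*η-3)) U := by
    rw [show (3*η-3:ℤ) = (3*η)*(1-η) from by linear_combination (3:ℤ)*hη2, zpow_mul]
    exact cHU.zpow_left _
  have cwV : Commute (Z^(3*η-3)) V := by
    rw [show (3*η-3:ℤ) = (3*η)*(1-η) from by linear_combination (3:ℤ)*hη2, zpow_mul]
    exact cHV.zpow_left _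
  have ccU : Commute (Z^(3*η*(3*e-η-2))) U := by
    rw [show (3*η*(3*e-η-2):ℤ) = (3*η)*(3*e-η-2) from by ring, zpow_mul]
    exact cHU.zpow_left _
  have ccV : Commute (Z^(3*η*(3*e-η-2))) V := by
    rw [show (3*η*(3*e-η-2):ℤ) = (3*η)*(3*e-η-2) from by ring, zpow_mul]
    exact cHV.zpow_left _
  have cm : Z^(3*η*e-2)*U⁻¹ = V⁻¹*Z^(3*η*e-2) := by
    have h1 : Z^(3*η*e-2)*U⁻¹ = Z*(Z^(3*η*e-3)*U⁻¹) := by group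
    rw [h1, cPU.inv_right.eq, ← cU']; group
  have c2m : Z^(6*η*e-4)*U⁻¹ = (V⁻¹*U⁻¹*Z^(3*η-3))⁻¹*Z^(6*η*e-4) := by
    have h1 : Z^(6*η*e-4)*U⁻¹ = Z*(Z*(Z^(6*η*e-6)*U⁻¹)) := by group
    rw [h1, cQU.inv_right.eq,
      show Z*(Z*(U⁻¹*Z^(6*η*e-6))) = Z*((Z*U⁻¹*Z⁻¹)*(Z*Z^(6*η*e-6))) from by group, cU',
      show Z*(V⁻¹*(Z*Z^(6*η*e-6))) = (Z*V⁻¹*Z⁻¹)*(Z*(Z*Z^(6*η*e-6))) from by group, cV']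
    group
  have n3c : U⁻¹*(V⁻¹*(U*V)) = (Z^(3*η*(3*e-η-2)))⁻¹ := by
    have h1 : U⁻¹*(V⁻¹*(U*V)) = (U*V)⁻¹*((V*U*V⁻¹*U⁻¹)⁻¹*(U*V)) := by group
    rw [h1, n3, ((ccU.mul_right ccV).inv_left).eq, inv_mul_cancel_left]
  refine ⟨D0, ?_⟩
  calc (U⁻¹*Z^(3*η*e-2))^(3:ℕ)
      = U⁻¹*((Z^(3*η*e-2)*U⁻¹)*(Z^(3*η*e-2)*(U⁻¹*Z^(3*η*e-2)))) := by
        simp only [pow_succ, pow_zero, one_mul]; group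
    _ = U⁻¹*((V⁻¹*Z^(3*η*e-2))*(Z^(3*η*e-2)*(U⁻¹*Z^(3*η*e-2)))) := by rw [cm]
    _ = U⁻¹*(V⁻¹*((Z^(6*η*e-4)*U⁻¹)*Z^(3*η*e-2))) := by group
    _ = U⁻¹*(V⁻¹*(((V⁻¹*U⁻¹*Z^(3*η-3))⁻¹*Z^(6*η*e-4))*Z^(3*η*e-2))) := by rw [c2m]
    _ = U⁻¹*(V⁻¹*((Z^(3*η-3))⁻¹*(U*(V*Z^(9*η*e-6))))) := by group
    _ = U⁻¹*(V⁻¹*(U*(V*((Z^(3*η-3))⁻¹*Z^(9*η*e-6))))) := by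
        rw [swap _ U (cwU.inv_left.eq) _, swap _ V (cwV.inv_left.eq) _]
    _ = (U⁻¹*(V⁻¹*(U*V)))*((Z^(3*η-3))⁻¹*Z^(9*η*e-6)) := by group
    _ = Z^(3*η) := by
        rw [n3c, show (3*η*(3*e-η-2):ℤ) = 9*η*e-3-6*η from by linear_combination (-3:ℤ)*hη2]
        group

theorem statement16 :
    ∀ e η : ℤ, Even e → (η = 1 ∨ η = -1) →
      ∃ φ : PresentedGroup (nilRels e η) ≃* Gam e η,
        φ (PresentedGroup.of 0) = uG e η ∧
        φ (PresentedGroup.of 1) = vG e η ∧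
        φ (PresentedGroup.of 2) = zG e η := by
  intro e η he hη
  have hη2 : η * η = 1 := by rcases hη with rfl | rfl <;> norm_num
  -- relations in Gam
  have mkg : ∀ r ∈ gamRels e η, (PresentedGroup.mk (gamRels e η) r : Gam e η) = 1 :=
    fun r hr => (QuotientGroup.eq_one_iff _).mpr (Subgroup.subset_normalClosure hr)
  have hx : (xG e η)^(3:ℕ) = hG e η := by
    have h1 := mkg _ (show ((FreeGroup.of 1)^3*(FreeGroup.of 0)⁻¹ : FreeGroup (Fin 4))
      ∈ gamRels e η from by simp [gamRels])
    simp only [map_mul, map_pow, map_inv] at h1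
    exact mul_inv_eq_one.mp h1
  have hy : (yG e η)^(3:ℕ) = hG e η := by
    have h1 := mkg _ (show ((FreeGroup.of 2)^3*(FreeGroup.of 0)⁻¹ : FreeGroup (Fin 4))
      ∈ gamRels e η from by simp [gamRels])
    simp only [map_mul, map_pow, map_inv] at h1
    exact mul_inv_eq_one.mp h1
  have hz : (zG e η)^(3*η) = hG e η := by
    have h1 := mkg _ (show ((FreeGroup.of 3)^(3*η)*(FreeGroup.of 0)⁻¹ : FreeGroup (Fin 4))
      ∈ gamRels e η from by simp [gamRels])
    simp only [map_mul, map_zpow, map_inv] at h1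
    exact mul_inv_eq_one.mp h1
  have hxyz : xG e η * yG e η * zG e η = (hG e η)^(e:ℤ) := by
    have h1 := mkg _ (show (FreeGroup.of 1 * FreeGroup.of 2 * FreeGroup.of 3 *
      ((FreeGroup.of 0)^(e:ℤ))⁻¹ : FreeGroup (Fin 4)) ∈ gamRels e η from by simp [gamRels])
    simp only [map_mul, map_zpow, map_inv] at h1
    exact mul_inv_eq_one.mp h1
  -- forward homomorphism
  have hf : ∀ r ∈ nilRels e η, FreeGroup.lift (fwdGen e η) r = 1 := by
    intro r hr
    simp only [nilRels, Set.mem_insert_iff, Set.mem_singleton_iff] at hr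
    rcases hr with rfl | rfl | rfl
    · simp only [map_mul, map_inv, map_zpow, FreeGroup.lift_apply_of, fwdGen,
        Matrix.cons_val_zero, Matrix.cons_val_one, Matrix.head_cons, Matrix.cons_val_two,
        Matrix.tail_cons, uG, vG]
      group
    · simp only [map_mul, map_inv, map_zpow, FreeGroup.lift_apply_of, fwdGen,
        Matrix.cons_val_zero, Matrix.cons_val_one, Matrix.head_cons, Matrix.cons_val_two,
        Matrix.tail_cons, uG, vG]
      rw [mul_inv_eq_one]
      exact gam_rel2 η (hG e η) (xG e η) (zG e η) hx hz
    · simp only [map_mul, map_inv, map_zpow, FreeGroup.lift_apply_of, fwdGen,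
        Matrix.cons_val_zero, Matrix.cons_val_one, Matrix.head_cons, Matrix.cons_val_two,
        Matrix.tail_cons, uG, vG]
      rw [mul_inv_eq_one]
      exact gam_comm e η hη2 (hG e η) (xG e η) (yG e η) (zG e η) hx hy hz hxyz
  -- relations in the nilpotent presentation
  have mkn : ∀ r ∈ nilRels e η, (PresentedGroup.mk (nilRels e η) r :
      PresentedGroup (nilRels e η)) = 1 :=
    fun r hr => (QuotientGroup.eq_one_iff _).mpr (Subgroup.subset_normalClosure hr)
  have n1 : (PresentedGroup.of 2 : PresentedGroup (nilRels e η)) * PresentedGroup.of 0 *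
      (PresentedGroup.of 2)⁻¹ = PresentedGroup.of 1 := by
    have h1 := mkn _ (show (FreeGroup.of 2 * FreeGroup.of 0 * (FreeGroup.of 2)⁻¹ *
      (FreeGroup.of 1)⁻¹ : FreeGroup (Fin 3)) ∈ nilRels e η from by simp [nilRels])
    simp only [map_mul, map_zpow, map_inv] at h1
    exact mul_inv_eq_one.mp h1
  have n2 : (PresentedGroup.of 2 : PresentedGroup (nilRels e η)) * PresentedGroup.of 1 *
      (PresentedGroup.of 2)⁻¹ = (PresentedGroup.of 1)⁻¹ * (PresentedGroup.of 0)⁻¹ *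
      (PresentedGroup.of 2)^(3*η-3) := by
    have h1 := mkn _ (show (FreeGroup.of 2 * FreeGroup.of 1 * (FreeGroup.of 2)⁻¹ *
      ((FreeGroup.of 1)⁻¹ * (FreeGroup.of 0)⁻¹ * (FreeGroup.of 2)^(3*η-3))⁻¹ :
      FreeGroup (Fin 3)) ∈ nilRels e η from by simp [nilRels])
    simp only [map_mul, map_zpow, map_inv] at h1
    exact mul_inv_eq_one.mp h1
  have n3 : (PresentedGroup.of 1 : PresentedGroup (nilRels e η)) * PresentedGroup.of 0 *
      (PresentedGroup.of 1)⁻¹ * (PresentedGroup.of 0)⁻¹ =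
      (PresentedGroup.of 2)^(3*η*(3*e-η-2)) := by
    have h1 := mkn _ (show (FreeGroup.of 1 * FreeGroup.of 0 * (FreeGroup.of 1)⁻¹ *
      (FreeGroup.of 0)⁻¹ * ((FreeGroup.of 2)^(3*η*(3*e-η-2)))⁻¹ :
      FreeGroup (Fin 3)) ∈ nilRels e η from by simp [nilRels])
    simp only [map_mul, map_zpow, map_inv] at h1
    exact mul_inv_eq_one.mp h1
  obtain ⟨D0, DY⟩ := nil_aux e η hη2 (PresentedGroup.of 0) (PresentedGroup.of 1)
    (PresentedGroup.of 2) n1 n2 n3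
  -- backward homomorphism
  have hg : ∀ r ∈ gamRels e η, FreeGroup.lift (bwdGen e η) r = 1 := by
    intro r hr
    simp only [gamRels, Set.mem_insert_iff, Set.mem_singleton_iff] at hr
    rcases hr with rfl | rfl | rfl | rfl
    · simp only [map_mul, map_inv, map_zpow, map_pow, FreeGroup.lift_apply_of, bwdGen,
        Matrix.cons_val_zero, Matrix.cons_val_one, Matrix.head_cons, Matrix.cons_val_two,
        Matrix.tail_cons, Matrix.cons_val_three]
      rw [mul_inv_eq_one]
      exact D0
    · simp only [map_mul, map_inv, map_zpow, map_pow, FreeGroup.lift_apply_of, bwdGen,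
        Matrix.cons_val_zero, Matrix.cons_val_one, Matrix.head_cons, Matrix.cons_val_two,
        Matrix.tail_cons, Matrix.cons_val_three]
      rw [mul_inv_eq_one,
        show ((PresentedGroup.of 2 : PresentedGroup (nilRels e η)) * PresentedGroup.of 0)⁻¹ *
          (PresentedGroup.of 2)^(3*η*e) * (PresentedGroup.of 2)⁻¹ =
          (PresentedGroup.of 0)⁻¹ * (PresentedGroup.of 2)^(3*η*e-2) from by group]
      exact DY
    · simp only [map_mul, map_inv, map_zpow, map_pow, FreeGroup.lift_apply_of, bwdGen,
        Matrix.cons_val_zero, Matrix.cons_val_one, Matrix.head_cons, Matrix.cons_val_two,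
        Matrix.tail_cons, Matrix.cons_val_three]
      group
    · simp only [map_mul, map_inv, map_zpow, map_pow, FreeGroup.lift_apply_of, bwdGen,
        Matrix.cons_val_zero, Matrix.cons_val_one, Matrix.head_cons, Matrix.cons_val_two,
        Matrix.tail_cons, Matrix.cons_val_three]
      rw [← zpow_mul]
      group
  have F0 : (PresentedGroup.toGroup hf) (PresentedGroup.of (0 : Fin 3)) = uG e η := by
    rw [PresentedGroup.toGroup.of]; rfl
  have F1 : (PresentedGroup.toGroup hf) (PresentedGroup.of (1 : Fin 3)) = vG e η := by
    rw [PresentedGroup.toGroup.of]; rfl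
  have F2 : (PresentedGroup.toGroup hf) (PresentedGroup.of (2 : Fin 3)) = zG e η := by
    rw [PresentedGroup.toGroup.of]; rfl
  have G0 : (PresentedGroup.toGroup hg) (PresentedGroup.of (0 : Fin 4)) =
      (PresentedGroup.of (2 : Fin 3))^(3*η) := by rw [PresentedGroup.toGroup.of]; rfl
  have G1 : (PresentedGroup.toGroup hg) (PresentedGroup.of (1 : Fin 4)) =
      PresentedGroup.of (2 : Fin 3) * PresentedGroup.of (0 : Fin 3) := by
    rw [PresentedGroup.toGroup.of]; rfl
  have G2 : (PresentedGroup.toGroup hg) (PresentedGroup.of (2 : Fin 4)) =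
      (PresentedGroup.of (2 : Fin 3) * PresentedGroup.of (0 : Fin 3))⁻¹ *
      (PresentedGroup.of (2 : Fin 3))^(3*η*e) * (PresentedGroup.of (2 : Fin 3))⁻¹ := by
    rw [PresentedGroup.toGroup.of]; rfl
  have G3 : (PresentedGroup.toGroup hg) (PresentedGroup.of (3 : Fin 4)) =
      PresentedGroup.of (2 : Fin 3) := by rw [PresentedGroup.toGroup.of]; rfl
  have L0 : (PresentedGroup.toGroup hg) ((PresentedGroup.toGroup hf)
      (PresentedGroup.of (0 : Fin 3))) = PresentedGroup.of (0 : Fin 3) := by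
    rw [F0, show uG e η = (zG e η)⁻¹ * xG e η from rfl, map_mul, map_inv,
      show zG e η = PresentedGroup.of 3 from rfl, show xG e η = PresentedGroup.of 1 from rfl,
      G3, G1]
    group
  have L1 : (PresentedGroup.toGroup hg) ((PresentedGroup.toGroup hf)
      (PresentedGroup.of (1 : Fin 3))) = PresentedGroup.of (1 : Fin 3) := by
    rw [F1, show vG e η = xG e η * (zG e η)⁻¹ from rfl, map_mul, map_inv,
      show zG e η = PresentedGroup.of 3 from rfl, show xG e η = PresentedGroup.of 1 from rfl,
      G3, G1, ← n1]
  have L2 : (PresentedGroup.toGroup hg) ((PresentedGroup.toGroup hf)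
      (PresentedGroup.of (2 : Fin 3))) = PresentedGroup.of (2 : Fin 3) := by
    rw [F2, show zG e η = PresentedGroup.of 3 from rfl, G3]
  have R0 : (PresentedGroup.toGroup hf) ((PresentedGroup.toGroup hg)
      (PresentedGroup.of (0 : Fin 4))) = PresentedGroup.of (0 : Fin 4) := by
    rw [G0, map_zpow, F2]
    exact hz
  have R1 : (PresentedGroup.toGroup hf) ((PresentedGroup.toGroup hg)
      (PresentedGroup.of (1 : Fin 4))) = PresentedGroup.of (1 : Fin 4) := by
    rw [G1, map_mul, F2, F0, show uG e η = (zG e η)⁻¹ * xG e η from rfl]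
    show zG e η * ((zG e η)⁻¹ * xG e η) = xG e η
    group
  have R2 : (PresentedGroup.toGroup hf) ((PresentedGroup.toGroup hg)
      (PresentedGroup.of (2 : Fin 4))) = PresentedGroup.of (2 : Fin 4) := by
    rw [G2, map_mul, map_mul, map_inv, map_inv, map_mul, map_zpow, F2, F0,
      show uG e η = (zG e η)⁻¹ * xG e η from rfl]
    show (zG e η * ((zG e η)⁻¹ * xG e η))⁻¹ * (zG e η)^(3*η*e) * (zG e η)⁻¹ = yG e η
    rw [show (3*η*e:ℤ) = (3*η)*e from by ring, zpow_mul, hz, ← hxyz]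
    group
  have R3 : (PresentedGroup.toGroup hf) ((PresentedGroup.toGroup hg)
      (PresentedGroup.of (3 : Fin 4))) = PresentedGroup.of (3 : Fin 4) := by
    rw [G3, F2]; rfl
  have left : (PresentedGroup.toGroup hg).comp (PresentedGroup.toGroup hf)
      = MonoidHom.id (PresentedGroup (nilRels e η)) := by
    ext i
    fin_cases i
    exacts [L0, L1, L2]
  have right : (PresentedGroup.toGroup hf).comp (PresentedGroup.toGroup hg)
      = MonoidHom.id (Gam e η) := by
    ext i
    fin_cases i
    exacts [R0, R1, R2, R3]
  exact ⟨MonoidHom.toMulEquiv (PresentedGroup.toGroup hf) (PresentedGroup.toGroup hg)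
    left right, F0, F1, F2⟩
end
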